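/- Every unitary U in the Clifford+T group 𝒥ₙᵀ can be written as U = e^{iφ} (∏_{j=m}^{1} R(P_j)) C₀, where φ ∈ [0, 2π), m ∈ ℕ, each P_j is a non-identity n-qubit Pauli matrix, and C₀ is an n-qubit Clifford unitary. -/

import Mathlib

open Matrix Complex

/-- Length-`n` vectors over `𝔽₂`, indexing computational basis states of `n` qubits. -/
abbrev QVec (n : ℕ) := Fin n → ZMod 2

/-- Integer (here: natural number) dot product of two 0/1 vectors. -/
def dotN {n : ℕ} (a b : QVec n) : ℕ := ∑ i, (a i).val * (b i).val

/-- The `n`-qubit Pauli matrix `P_{a,b}`. -/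
noncomputable def Pauli {n : ℕ} (a b : QVec n) : Matrix (QVec n) (QVec n) ℂ :=
  fun x y => if x = y + a then Complex.I ^ dotN a b * (-1 : ℂ) ^ dotN b y else 0

/-- A `2^n × 2^n` unitary is Clifford if it maps every Pauli matrix to a
Pauli matrix up to a sign `±1`, under conjugation. -/
def IsClifford {n : ℕ} (C : Matrix (QVec n) (QVec n) ℂ) : Prop :=
  C ∈ Matrix.unitaryGroup (QVec n) ℂ ∧
    ∀ a b : QVec n, ∃ a' b' : QVec n, ∃ ε : ℂ, (ε = 1 ∨ ε = -1) ∧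
      C * Pauli a b * Cᴴ = ε • Pauli a' b'

/-- The channel representation `Û` of a `2^n × 2^n` matrix `U`:
rows/columns indexed by Pauli matrices, `Û_{rs} = (1/2^n) Tr(P_r U P_s U†)`. -/
noncomputable def chan {n : ℕ} (U : Matrix (QVec n) (QVec n) ℂ) :
    Matrix (QVec n × QVec n) (QVec n × QVec n) ℂ :=
  fun r s => ((1 : ℂ) / 2 ^ n) * Matrix.trace (Pauli r.1 r.2 * U * Pauli s.1 s.2 * Uᴴ)

/-- The gate `T ⊗ I_{2^{n-1}}`, where `T = diag(1, e^{iπ/4})` acts on the first qubit. -/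
noncomputable def Tgate (n : ℕ) : Matrix (QVec n) (QVec n) ℂ :=
  Matrix.diagonal fun x =>
    if h : 0 < n then (if x ⟨0, h⟩ = 1 then Complex.exp (Complex.I * Real.pi / 4) else 1) else 1

/-- The Clifford+T group `𝒥ₙᵀ`: the subgroup of the unitary group generated by the
Clifford unitaries together with `T ⊗ I_{2^{n-1}}`. -/
noncomputable def CliffordTGroup (n : ℕ) : Subgroup (Matrix.unitaryGroup (QVec n) ℂ) :=
  Subgroup.closure
    {u | IsClifford (u : Matrix (QVec n) (QVec n) ℂ) ∨ (u : Matrix (QVec n) (QVec n) ℂ) = Tgate n}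

/-- `R(P) = ((1+e^{iπ/4})/2) I + ((1−e^{iπ/4})/2) P`. -/
noncomputable def Rgate {n : ℕ} (P : Matrix (QVec n) (QVec n) ℂ) : Matrix (QVec n) (QVec n) ℂ :=
  ((1 + Complex.exp (Complex.I * Real.pi / 4)) / 2) • (1 : Matrix (QVec n) (QVec n) ℂ) +
    ((1 - Complex.exp (Complex.I * Real.pi / 4)) / 2) • P

section
variable {n : ℕ}
section
variable {n : ℕ}

lemma zmod2_cases (u : ZMod 2) : u = 0 ∨ u = 1 := by revert u; decide

lemma qvec_add_self (a : QVec n) : a + a = 0 := by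
  funext i
  show a i + a i = 0
  rcases zmod2_cases (a i) with h | h <;> rw [h] <;> decide

lemma qvec_add_add_cancel (x a : QVec n) : x + a + a = x := by
  rw [add_assoc, qvec_add_self, add_zero]

lemma qvec_eq_add_iff (x y a : QVec n) : x = y + a ↔ y = x + a := by
  constructor <;> rintro rfl <;> rw [qvec_add_add_cancel]

lemma dotN_comm (a b : QVec n) : dotN a b = dotN b a := by
  unfold dotN; exact Finset.sum_congr rfl fun i _ => Nat.mul_comm _ _

lemma neg_one_pow_sq (k : ℕ) : (-1 : ℂ) ^ k * (-1 : ℂ) ^ k = 1 := by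
  rw [← pow_add, ← two_mul, pow_mul]; norm_num

lemma neg_one_pow_mul_val_add (c : ℕ) (u v : ZMod 2) :
    (-1 : ℂ) ^ (c * (u + v).val) = (-1 : ℂ) ^ (c * u.val) * (-1 : ℂ) ^ (c * v.val) := by
  rcases zmod2_cases u with hu | hu <;> rcases zmod2_cases v with hv | hv <;> subst hu hv
  · simp
  · simp
  · simp
  · have h11 : ((1 : ZMod 2) + 1) = 0 := by decide
    rw [h11]
    have : ZMod.val (0 : ZMod 2) = 0 := rfl
    rw [this, Nat.mul_zero, pow_zero, neg_one_pow_sq]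

lemma neg_one_pow_dotN (b y : QVec n) :
    (-1 : ℂ) ^ dotN b y = ∏ i, (-1 : ℂ) ^ ((b i).val * (y i).val) := by
  rw [Finset.prod_pow_eq_pow_sum]; rfl

lemma neg_one_pow_dotN_add (b x a : QVec n) :
    (-1 : ℂ) ^ dotN b (x + a) = (-1 : ℂ) ^ dotN b x * (-1 : ℂ) ^ dotN b a := by
  rw [neg_one_pow_dotN, neg_one_pow_dotN, neg_one_pow_dotN, ← Finset.prod_mul_distrib]
  exact Finset.prod_congr rfl fun i _ => neg_one_pow_mul_val_add _ _ _

lemma Pauli_zero_zero : Pauli (0 : QVec n) 0 = 1 := by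
  funext x y
  simp [Pauli, dotN, Matrix.one_apply, eq_comm]

lemma Pauli_mul_self (a b : QVec n) : Pauli a b * Pauli a b = 1 := by
  funext x z
  rw [Matrix.mul_apply]
  have h1 : ∀ y : QVec n, Pauli a b x y * Pauli a b y z
      = if y = x + a then (Complex.I ^ dotN a b * (-1:ℂ) ^ dotN b y) * Pauli a b y z else 0 := by
    intro y
    show (if x = y + a then Complex.I ^ dotN a b * (-1:ℂ) ^ dotN b y else 0) * Pauli a b y z = _
    simp only [qvec_eq_add_iff x y a, ite_mul, zero_mul]
  simp only [h1]
  rw [Finset.sum_ite_eq' Finset.univ (x + a) _]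
  simp only [Finset.mem_univ, if_pos]
  show _ * (if x + a = z + a then Complex.I ^ dotN a b * (-1:ℂ) ^ dotN b z else 0) = _
  by_cases hz : x + a = z + a
  · have hxz : x = z := by
      have := congrArg (· + a) hz
      simpa [qvec_add_add_cancel] using this
    rw [if_pos hz, Matrix.one_apply, if_pos hxz]
    subst hxz
    rw [neg_one_pow_dotN_add]
    have : Complex.I ^ dotN a b * ((-1:ℂ) ^ dotN b x * (-1:ℂ) ^ dotN b a) *
        (Complex.I ^ dotN a b * (-1:ℂ) ^ dotN b x)
        = (Complex.I ^ dotN a b * Complex.I ^ dotN a b * (-1:ℂ) ^ dotN b a) *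
          ((-1:ℂ) ^ dotN b x * (-1:ℂ) ^ dotN b x) := by ring
    rw [this, neg_one_pow_sq, mul_one, ← pow_add, ← two_mul, pow_mul, I_sq,
      dotN_comm b a, neg_one_pow_sq]
  · have hxz : ¬ x = z := fun h => hz (by rw [h])
    rw [if_neg hz, mul_zero, Matrix.one_apply, if_neg hxz]

lemma Pauli_conjTranspose (a b : QVec n) : (Pauli a b)ᴴ = Pauli a b := by
  funext x y
  rw [Matrix.conjTranspose_apply]
  show star (if y = x + a then Complex.I ^ dotN a b * (-1:ℂ) ^ dotN b x else 0)
      = if x = y + a then Complex.I ^ dotN a b * (-1:ℂ) ^ dotN b y else 0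
  by_cases h : x = y + a
  · rw [if_pos ((qvec_eq_add_iff x y a).mp h), if_pos h]
    subst h
    rw [neg_one_pow_dotN_add]
    simp only [star_mul', star_pow, Complex.star_def, Complex.conj_I, map_neg, _root_.map_one]
    rw [neg_pow Complex.I, dotN_comm b a]
    ring_nf
    rw [mul_comm (dotN a b) 2, pow_mul, neg_one_sq, one_pow, mul_one]
  · rw [if_neg fun hy => h ((qvec_eq_add_iff x y a).mpr hy), if_neg h, star_zero]


/-- the j-th standard basis vector -/
def ej (j : Fin n) : QVec n := fun i => if i = j then 1 else 0

lemma dotN_ej (b : QVec n) (j : Fin n) : dotN b (ej j) = (b j).val := by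
  unfold dotN ej
  have h : ∀ i ∈ Finset.univ, (b i).val * ((if i = j then (1:ZMod 2) else 0)).val
      = if i = j then (b j).val else 0 := by
    intro i _
    by_cases h : i = j
    · subst h; simp [ZMod.val_one]
    · simp [h]
  rw [Finset.sum_congr rfl h, Finset.sum_ite_eq' Finset.univ j]
  simp

lemma dotN_zero_right (b : QVec n) : dotN b 0 = 0 := by
  unfold dotN; simp [ZMod.val_zero]

lemma Pauli_apply_add (a b y : QVec n) :
    Pauli a b (y + a) y = Complex.I ^ dotN a b * (-1 : ℂ) ^ dotN b y := by
  show ite _ _ _ = _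
  rw [if_pos rfl]

lemma Pauli_apply_of_ne (a b : QVec n) {x y : QVec n} (h : x ≠ y + a) :
    Pauli a b x y = 0 := by
  show ite _ _ _ = _
  rw [if_neg h]

lemma I_pow_ne_zero (k : ℕ) : (Complex.I) ^ k ≠ 0 := pow_ne_zero _ I_ne_zero

lemma Pauli_inj {a b a' b' : QVec n} {ε : ℂ} (hε : ε = 1 ∨ ε = -1)
    (heq : Pauli a b = ε • Pauli a' b') : a = a' ∧ b = b' ∧ ε = 1 := by
  have hεne : ε ≠ 0 := by rcases hε with h | h <;> rw [h] <;> norm_num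
  have haa : a = a' := by
    by_contra hne
    have h0 := congrFun (congrFun heq (0 + a)) 0
    rw [Pauli_apply_add, Matrix.smul_apply, Pauli_apply_of_ne a' b'
      (by simpa using fun h : (0:QVec n) + a = 0 + a' => hne (by simpa using h))] at h0
    simp only [smul_zero] at h0
    exact mul_ne_zero (I_pow_ne_zero _) (pow_ne_zero _ (by norm_num)) h0
  subst haa
  have key : ∀ y : QVec n, Complex.I ^ dotN a b * (-1:ℂ) ^ dotN b y
      = ε * (Complex.I ^ dotN a b' * (-1:ℂ) ^ dotN b' y) := by
    intro y
    have := congrFun (congrFun heq (y + a)) y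
    rwa [Pauli_apply_add, Matrix.smul_apply, Pauli_apply_add, smul_eq_mul] at this
  have hc := key 0
  rw [dotN_zero_right, dotN_zero_right, pow_zero, mul_one, mul_one] at hc
  have hbb : b = b' := by
    funext j
    have hj := key (ej j)
    rw [dotN_ej, dotN_ej, hc] at hj
    have hcan : (-1:ℂ) ^ (b j).val = (-1:ℂ) ^ (b' j).val := by
      have h2 : ε * Complex.I ^ dotN a b' * (-1:ℂ)^(b j).val
          = ε * Complex.I ^ dotN a b' * (-1:ℂ)^(b' j).val := by linear_combination hj
      exact mul_left_cancel₀ (mul_ne_zero hεne (I_pow_ne_zero _)) h2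
    rcases zmod2_cases (b j) with h1 | h1 <;> rcases zmod2_cases (b' j) with h2 | h2 <;>
      rw [h1, h2] <;> rw [h1, h2] at hcan <;> first
      | rfl
      | (exfalso; revert hcan; norm_num [ZMod.val_zero, ZMod.val_one])
  subst hbb
  refine ⟨rfl, rfl, ?_⟩
  have h3 := hc
  nth_rewrite 1 [← one_mul (Complex.I ^ dotN a b)] at h3
  exact (mul_right_cancel₀ (I_pow_ne_zero _) h3).symm

lemma Pauli_eq_one_iff (a b : QVec n) : Pauli a b = 1 ↔ a = 0 ∧ b = 0 := by
  constructor
  · intro h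
    have h2 : Pauli a b = (1:ℂ) • Pauli 0 0 := by rw [one_smul, Pauli_zero_zero, h]
    have h3 := Pauli_inj (Or.inl rfl) h2
    exact ⟨h3.1, h3.2.1⟩
  · rintro ⟨rfl, rfl⟩
    exact Pauli_zero_zero

lemma Pauli_ne_neg_smul (a b a' b' : QVec n) : Pauli a b ≠ (-1:ℂ) • Pauli a' b' := by
  intro h
  have := (Pauli_inj (Or.inr rfl) h).2.2
  norm_num at this


lemma unitary_left {C : Matrix (QVec n) (QVec n) ℂ} (h : C ∈ Matrix.unitaryGroup (QVec n) ℂ) :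
    Cᴴ * C = 1 := by
  simpa [Matrix.star_eq_conjTranspose] using Matrix.mem_unitaryGroup_iff'.mp h

lemma unitary_right {C : Matrix (QVec n) (QVec n) ℂ} (h : C ∈ Matrix.unitaryGroup (QVec n) ℂ) :
    C * Cᴴ = 1 := by
  simpa [Matrix.star_eq_conjTranspose] using Matrix.mem_unitaryGroup_iff.mp h

lemma isClifford_one : IsClifford (1 : Matrix (QVec n) (QVec n) ℂ) := by
  refine ⟨one_mem _, fun a b => ⟨a, b, 1, Or.inl rfl, ?_⟩⟩
  simp [Matrix.conjTranspose_one]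

lemma IsClifford.mul {C D : Matrix (QVec n) (QVec n) ℂ} (hC : IsClifford C) (hD : IsClifford D) :
    IsClifford (C * D) := by
  refine ⟨mul_mem hC.1 hD.1, fun a b => ?_⟩
  obtain ⟨a', b', ε, hε, h1⟩ := hD.2 a b
  obtain ⟨a'', b'', ε', hε', h2⟩ := hC.2 a' b'
  refine ⟨a'', b'', ε * ε', ?_, ?_⟩
  · rcases hε with rfl | rfl <;> rcases hε' with rfl | rfl <;> norm_num
  · have : C * D * Pauli a b * (C * D)ᴴ = C * (D * Pauli a b * Dᴴ) * Cᴴ := by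
      rw [Matrix.conjTranspose_mul]
      simp only [Matrix.mul_assoc]
    rw [this, h1, Matrix.mul_smul, Matrix.smul_mul, h2, smul_smul]

lemma conj_unconj {C : Matrix (QVec n) (QVec n) ℂ}
    (hu : C ∈ Matrix.unitaryGroup (QVec n) ℂ) (M : Matrix (QVec n) (QVec n) ℂ) :
    Cᴴ * (C * M * Cᴴ) * C = M := by
  rw [← Matrix.mul_assoc, ← Matrix.mul_assoc, unitary_left hu, Matrix.one_mul,
    Matrix.mul_assoc, unitary_left hu, Matrix.mul_one]

lemma conj_cancel {C P Q : Matrix (QVec n) (QVec n) ℂ} {ε : ℂ}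
    (hu : C ∈ Matrix.unitaryGroup (QVec n) ℂ) (hε2 : ε * ε = 1)
    (h : C * P * Cᴴ = ε • Q) : Cᴴ * Q * C = ε • P := by
  have h1 : ε • (Cᴴ * Q * C) = P := by
    have := conj_unconj hu P
    rw [h] at this
    rw [← this, Matrix.mul_smul, Matrix.smul_mul]
  rw [← h1, smul_smul, hε2, one_smul]

lemma IsClifford.conjTranspose {C : Matrix (QVec n) (QVec n) ℂ} (hC : IsClifford C) :
    IsClifford Cᴴ := by
  have hmem : Cᴴ ∈ Matrix.unitaryGroup (QVec n) ℂ := by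
    rw [← Matrix.star_eq_conjTranspose]
    exact Unitary.star_mem hC.1
  refine ⟨hmem, ?_⟩
  have hch : ∀ p : QVec n × QVec n, ∃ q : QVec n × QVec n, ∃ ε : ℂ, (ε = 1 ∨ ε = -1) ∧
      C * Pauli p.1 p.2 * Cᴴ = ε • Pauli q.1 q.2 := by
    intro p
    obtain ⟨a', b', ε, hε, h⟩ := hC.2 p.1 p.2
    exact ⟨(a', b'), ε, hε, h⟩
  choose f εf hεf hf using hch
  have hsq : ∀ p, εf p * εf p = 1 := by
    intro p; rcases hεf p with h | h <;> rw [h] <;> norm_num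
  have hinj : Function.Injective f := by
    intro p q hpq
    have h1 := hf p
    have h2 := hf q
    rw [hpq] at h1
    -- C P_p Cᴴ = εf p • X, C P_q Cᴴ = εf q • X
    have h3 : C * Pauli p.1 p.2 * Cᴴ = (εf p * εf q) • (C * Pauli q.1 q.2 * Cᴴ) := by
      rw [h1, h2, smul_smul, mul_assoc, hsq q, mul_one]
    have h4 : C * Pauli p.1 p.2 * Cᴴ = C * ((εf p * εf q) • Pauli q.1 q.2) * Cᴴ := by
      rw [h3, Matrix.mul_smul, Matrix.smul_mul]
    have h5 : Pauli p.1 p.2 = (εf p * εf q) • Pauli q.1 q.2 := by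
      have e1 := conj_unconj hC.1 (Pauli p.1 p.2)
      have e2 := conj_unconj hC.1 ((εf p * εf q) • Pauli q.1 q.2)
      rw [← e1, ← e2, h4]
    have hεpq : εf p * εf q = 1 ∨ εf p * εf q = -1 := by
      rcases hεf p with h | h <;> rcases hεf q with h' | h' <;> rw [h, h'] <;> norm_num
    obtain ⟨e1, e2, _⟩ := Pauli_inj hεpq h5
    exact Prod.ext e1 e2
  have hsurj : Function.Surjective f := Finite.surjective_of_injective hinj
  intro a b
  obtain ⟨p, hp⟩ := hsurj (a, b)
  refine ⟨p.1, p.2, εf p, hεf p, ?_⟩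
  have := conj_cancel hC.1 (hsq p) (hf p)
  rw [hp] at this
  rw [Matrix.conjTranspose_conjTranspose]
  exact this

noncomputable def omg : ℂ := Complex.exp (Complex.I * Real.pi / 4)

noncomputable def RC (c : ℂ) (P : Matrix (QVec n) (QVec n) ℂ) : Matrix (QVec n) (QVec n) ℂ :=
  ((1 + c) / 2) • (1 : Matrix (QVec n) (QVec n) ℂ) + ((1 - c) / 2) • P

lemma Rgate_eq_RC (P : Matrix (QVec n) (QVec n) ℂ) : Rgate P = RC omg P := rfl

lemma omg_pow_eight : omg ^ 8 = 1 := by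
  rw [omg, ← Complex.exp_nat_mul]
  rw [show ((8 : ℕ) : ℂ) * (Complex.I * (Real.pi : ℂ) / 4) = 2 * (Real.pi : ℂ) * Complex.I by
    push_cast; ring]
  exact Complex.exp_two_pi_mul_I

lemma star_omg_mul_omg : star omg * omg = 1 := by
  rw [omg, Complex.star_def, ← Complex.exp_conj, ← Complex.exp_add]
  rw [show (starRingEnd ℂ) (Complex.I * (Real.pi:ℂ) / 4) + Complex.I * (Real.pi:ℂ) / 4 = 0 by
    simp [map_div₀, Complex.conj_I, Complex.conj_ofReal, map_ofNat]; ring]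
  exact Complex.exp_zero

lemma smul_one_add_smul_mul {P : Matrix (QVec n) (QVec n) ℂ} (hP : P * P = 1)
    (x y x' y' : ℂ) :
    (x • (1 : Matrix (QVec n) (QVec n) ℂ) + y • P) * (x' • 1 + y' • P)
      = (x * x' + y * y') • (1 : Matrix (QVec n) (QVec n) ℂ) + (x * y' + y * x') • P := by
  simp only [add_mul, mul_add, Matrix.smul_mul, Matrix.mul_smul, one_mul, mul_one, hP,
    smul_smul]
  module

lemma RC_mul_self {P : Matrix (QVec n) (QVec n) ℂ} (hP : P * P = 1) (c : ℂ) :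
    RC c P * RC c P = RC (c ^ 2) P := by
  have e1 : (1+c)/2 * ((1+c)/2) + (1-c)/2 * ((1-c)/2) = (1 + c^2)/2 := by ring
  have e2 : (1+c)/2 * ((1-c)/2) + (1-c)/2 * ((1+c)/2) = (1 - c^2)/2 := by ring
  rw [RC, smul_one_add_smul_mul hP, e1, e2, RC]

lemma RC_one (P : Matrix (QVec n) (QVec n) ℂ) : RC 1 P = 1 := by
  rw [RC]
  norm_num

lemma Rgate_pow_eight {P : Matrix (QVec n) (QVec n) ℂ} (hP : P * P = 1) :
    Rgate P ^ 8 = 1 := by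
  have h : Rgate P ^ 8 = ((Rgate P ^ 2) ^ 2) ^ 2 := by rw [← pow_mul, ← pow_mul]
  have h2 : Rgate P ^ 2 = RC (omg ^ 2) P := by rw [sq, Rgate_eq_RC, RC_mul_self hP]
  have h4 : RC (omg ^ 2) P ^ 2 = RC ((omg ^ 2) ^ 2) P := by rw [sq, RC_mul_self hP]
  have h8 : RC ((omg ^ 2) ^ 2) P ^ 2 = RC (((omg ^ 2) ^ 2) ^ 2) P := by rw [sq, RC_mul_self hP]
  rw [h, h2, h4, h8, show ((omg ^ 2) ^ 2) ^ 2 = omg ^ 8 by ring, omg_pow_eight, RC_one]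

lemma Rgate_mul_neg {P : Matrix (QVec n) (QVec n) ℂ} (hP : P * P = 1) :
    Rgate P * Rgate ((-1 : ℂ) • P) = omg • 1 := by
  have hneg : Rgate ((-1 : ℂ) • P)
      = ((1 + omg)/2) • (1 : Matrix (QVec n) (QVec n) ℂ) + (-((1 - omg)/2)) • P := by
    rw [Rgate_eq_RC, RC, smul_smul]
    ring_nf
  rw [Rgate_eq_RC, RC, hneg, smul_one_add_smul_mul hP]
  have e1 : (1+omg)/2 * ((1+omg)/2) + (1-omg)/2 * (-((1-omg)/2)) = omg := by ring
  have e2 : (1+omg)/2 * (-((1-omg)/2)) + (1-omg)/2 * ((1+omg)/2) = 0 := by ring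
  rw [e1, e2, zero_smul, add_zero]

lemma Rgate_neg_eq {P : Matrix (QVec n) (QVec n) ℂ} (hP : P * P = 1) :
    Rgate ((-1 : ℂ) • P) = omg • Rgate P ^ 7 := by
  calc Rgate ((-1 : ℂ) • P) = Rgate P ^ 8 * Rgate ((-1:ℂ) • P) := by
        rw [Rgate_pow_eight hP, one_mul]
    _ = Rgate P ^ 7 * (Rgate P * Rgate ((-1:ℂ) • P)) := by
        rw [← Matrix.mul_assoc, ← pow_succ]
    _ = omg • Rgate P ^ 7 := by rw [Rgate_mul_neg hP, Matrix.mul_smul, Matrix.mul_one]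

lemma Rgate_conjTranspose {P : Matrix (QVec n) (QVec n) ℂ} (hP : P * P = 1) (hH : Pᴴ = P) :
    (Rgate P)ᴴ = Rgate P ^ 7 := by
  have hstar1 : star ((1 + omg)/2) = (1 + star omg)/2 := by
    simp [Complex.star_def, map_div₀]
  have hstar2 : star ((1 - omg)/2) = (1 - star omg)/2 := by
    simp [Complex.star_def, map_div₀]
  have hH' : (Rgate P)ᴴ = ((1 + star omg)/2) • (1 : Matrix (QVec n) (QVec n) ℂ)
      + ((1 - star omg)/2) • P := by
    rw [Rgate_eq_RC, RC, Matrix.conjTranspose_add, Matrix.conjTranspose_smul,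
      Matrix.conjTranspose_smul, Matrix.conjTranspose_one, hH, hstar1, hstar2]
  have hinv : (Rgate P)ᴴ * Rgate P = 1 := by
    rw [hH', Rgate_eq_RC, RC, smul_one_add_smul_mul hP]
    have hw := star_omg_mul_omg
    have e1 : (1 + star omg)/2 * ((1 + omg)/2) + (1 - star omg)/2 * ((1 - omg)/2) = 1 := by
      linear_combination hw / 2
    have e2 : (1 + star omg)/2 * ((1 - omg)/2) + (1 - star omg)/2 * ((1 + omg)/2) = 0 := by
      linear_combination -hw / 2
    rw [e1, e2, zero_smul, add_zero, one_smul]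
  calc (Rgate P)ᴴ = (Rgate P)ᴴ * Rgate P ^ 8 := by rw [Rgate_pow_eight hP, Matrix.mul_one]
    _ = ((Rgate P)ᴴ * Rgate P) * Rgate P ^ 7 := by rw [pow_succ', ← Matrix.mul_assoc]
    _ = Rgate P ^ 7 := by rw [hinv, Matrix.one_mul]

lemma conj_Rgate {C P : Matrix (QVec n) (QVec n) ℂ} (hCr : C * Cᴴ = 1) :
    C * Rgate P * Cᴴ = Rgate (C * P * Cᴴ) := by
  rw [Rgate, Rgate]
  simp only [Matrix.mul_add, Matrix.add_mul, Matrix.mul_smul, Matrix.smul_mul, Matrix.mul_one,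
    ← Matrix.mul_assoc]
  rw [hCr]

/-- product of R-gates over a list of Pauli labels -/
noncomputable def Rprod (l : List (QVec n × QVec n)) : Matrix (QVec n) (QVec n) ℂ :=
  (l.map fun p => Rgate (Pauli p.1 p.2)).prod

lemma Rprod_nil : Rprod ([] : List (QVec n × QVec n)) = 1 := rfl

lemma Rprod_cons (p : QVec n × QVec n) (l : List (QVec n × QVec n)) :
    Rprod (p :: l) = Rgate (Pauli p.1 p.2) * Rprod l := by
  simp [Rprod]

lemma Rprod_append (l₁ l₂ : List (QVec n × QVec n)) :
    Rprod (l₁ ++ l₂) = Rprod l₁ * Rprod l₂ := by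
  simp [Rprod]

lemma Rprod_replicate (k : ℕ) (p : QVec n × QVec n) :
    Rprod (List.replicate k p) = Rgate (Pauli p.1 p.2) ^ k := by
  simp [Rprod, List.map_replicate, List.prod_replicate]

lemma Pauli_conj_ne_one {C : Matrix (QVec n) (QVec n) ℂ}
    (hu : C ∈ Matrix.unitaryGroup (QVec n) ℂ) {a b a' b' : QVec n} {ε : ℂ}
    (hε : ε = 1 ∨ ε = -1) (h : C * Pauli a b * Cᴴ = ε • Pauli a' b')
    (hne : Pauli a b ≠ 1) : Pauli a' b' ≠ 1 := by
  intro h1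
  have h2 : Pauli a b = ε • Pauli 0 0 := by
    rw [Pauli_zero_zero]
    have h3 := conj_unconj hu (Pauli a b)
    rw [h, h1] at h3
    rw [← h3, Matrix.mul_smul, Matrix.smul_mul, Matrix.mul_one, unitary_left hu]
  obtain ⟨e1, e2, _⟩ := Pauli_inj hε h2
  exact hne (by rw [e1, e2]; exact Pauli_zero_zero)

/-- moving a Clifford past a product of R-gates -/
lemma conj_Rprod {C : Matrix (QVec n) (QVec n) ℂ} (hC : IsClifford C) :
    ∀ l : List (QVec n × QVec n), (∀ p ∈ l, Pauli p.1 p.2 ≠ 1) →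
    ∃ l' : List (QVec n × QVec n), (∀ p ∈ l', Pauli p.1 p.2 ≠ 1) ∧
      ∃ t : ℕ, C * Rprod l = omg ^ t • (Rprod l' * C) := by
  intro l
  induction l with
  | nil =>
    intro _
    exact ⟨[], by simp, 0, by simp [Rprod_nil]⟩
  | cons p l ih =>
    intro hmem
    obtain ⟨l', hl', t, ht⟩ := ih fun q hq => hmem q (List.mem_cons_of_mem _ hq)
    obtain ⟨a', b', ε, hε, hconj⟩ := hC.2 p.1 p.2
    have hne' : Pauli a' b' ≠ 1 :=
      Pauli_conj_ne_one hC.1 hε hconj (hmem p List.mem_cons_self)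
    have hmain : C * Rgate (Pauli p.1 p.2) = Rgate (ε • Pauli a' b') * C := by
      have h1 : C * Rgate (Pauli p.1 p.2) * Cᴴ = Rgate (ε • Pauli a' b') := by
        rw [conj_Rgate (unitary_right hC.1), hconj]
      calc C * Rgate (Pauli p.1 p.2)
          = (C * Rgate (Pauli p.1 p.2) * Cᴴ) * C := by
            rw [Matrix.mul_assoc (C * Rgate (Pauli p.1 p.2)), unitary_left hC.1,
              Matrix.mul_one]
        _ = Rgate (ε • Pauli a' b') * C := by rw [h1]
    rcases hε with rfl | rfl
    · refine ⟨(a', b') :: l', ?_, t, ?_⟩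
      · intro q hq
        rcases List.mem_cons.mp hq with rfl | hq
        · exact hne'
        · exact hl' q hq
      · rw [Rprod_cons, ← Matrix.mul_assoc, hmain, one_smul, Matrix.mul_assoc, ht,
          Matrix.mul_smul, Rprod_cons]
        rw [Matrix.mul_assoc]
    · refine ⟨List.replicate 7 (a', b') ++ l', ?_, t + 1, ?_⟩
      · intro q hq
        rcases List.mem_append.mp hq with hq | hq
        · rw [(List.eq_of_mem_replicate hq : q = (a', b'))]
          exact hne'
        · exact hl' q hq
      · have hstep : Rgate ((-1:ℂ) • Pauli a' b') * (C * Rprod l)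
            = omg ^ (t+1) • (Rprod (List.replicate 7 (a', b') ++ l') * C) := by
          rw [ht, Rgate_neg_eq (Pauli_mul_self a' b'), Matrix.smul_mul, Matrix.mul_smul,
            smul_smul, Rprod_append, Rprod_replicate]
          rw [show omg * omg ^ t = omg ^ (t+1) by rw [pow_succ]; ring]
          rw [Matrix.mul_assoc]
        rw [Rprod_cons, ← Matrix.mul_assoc, hmain, Matrix.mul_assoc, hstep]

/-- the invariant -/
def Good (U : Matrix (QVec n) (QVec n) ℂ) : Prop :=
  ∃ (φ : ℝ) (l : List (QVec n × QVec n)) (C₀ : Matrix (QVec n) (QVec n) ℂ),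
    (∀ p ∈ l, Pauli p.1 p.2 ≠ 1) ∧ IsClifford C₀ ∧
    U = Complex.exp (Complex.I * φ) • (Rprod l * C₀)

lemma omg_pow_phase (t : ℕ) :
    (omg : ℂ) ^ t = Complex.exp (Complex.I * ((Real.pi * t / 4 : ℝ) : ℂ)) := by
  rw [omg, ← Complex.exp_nat_mul]
  congr 1
  push_cast
  ring

lemma Good.clifford {C : Matrix (QVec n) (QVec n) ℂ} (hC : IsClifford C) : Good C := by
  refine ⟨0, [], C, by simp, hC, ?_⟩
  simp [Rprod_nil]

lemma Good.mul {U V : Matrix (QVec n) (QVec n) ℂ} (hU : Good U) (hV : Good V) :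
    Good (U * V) := by
  obtain ⟨φ, l, C, hl, hC, hUe⟩ := hU
  obtain ⟨ψ, m, D, hm, hD, hVe⟩ := hV
  obtain ⟨m', hm', t, ht⟩ := conj_Rprod hC m hm
  refine ⟨φ + ψ + Real.pi * t / 4, l ++ m', C * D, fun p hp => ?_, hC.mul hD, ?_⟩
  · rcases List.mem_append.mp hp with hp | hp
    · exact hl p hp
    · exact hm' p hp
  · rw [hUe, hVe, Matrix.smul_mul, Matrix.mul_smul, smul_smul]
    have hmat : Rprod l * C * (Rprod m * D) = omg ^ t • (Rprod (l ++ m') * (C * D)) := by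
      calc Rprod l * C * (Rprod m * D) = Rprod l * (C * Rprod m) * D := by
            simp only [Matrix.mul_assoc]
        _ = Rprod l * (omg ^ t • (Rprod m' * C)) * D := by rw [ht]
        _ = omg ^ t • (Rprod (l ++ m') * (C * D)) := by
            rw [Matrix.mul_smul, Matrix.smul_mul, Rprod_append]
            congr 1
            simp only [Matrix.mul_assoc]
    rw [hmat, smul_smul, omg_pow_phase, ← Complex.exp_add, ← Complex.exp_add]
    congr 1
    push_cast
    ring

lemma Rprod_conjTranspose (l : List (QVec n × QVec n)) :
    (Rprod l)ᴴ = Rprod (l.reverse.flatMap fun p => List.replicate 7 p) := by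
  induction l with
  | nil => simp [Rprod_nil]
  | cons p l ih =>
    rw [Rprod_cons, Matrix.conjTranspose_mul, ih,
      Rgate_conjTranspose (Pauli_mul_self p.1 p.2) (Pauli_conjTranspose p.1 p.2)]
    rw [List.reverse_cons, List.flatMap_append, ← Rprod_replicate 7 p, ← Rprod_append]
    congr 1
    all_goals simp

lemma Good.conjTranspose {U : Matrix (QVec n) (QVec n) ℂ} (hU : Good U) : Good Uᴴ := by
  obtain ⟨φ, l, C, hl, hC, hUe⟩ := hU
  have hl₂ : ∀ p ∈ l.reverse.flatMap fun p => List.replicate 7 p, Pauli p.1 p.2 ≠ 1 := by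
    intro p hp
    obtain ⟨q, hq, hpq⟩ := List.mem_flatMap.mp hp
    rw [List.eq_of_mem_replicate hpq]
    exact hl q (List.mem_reverse.mp hq)
  obtain ⟨l₃, hl₃, t, ht⟩ := conj_Rprod hC.conjTranspose _ hl₂
  refine ⟨-φ + Real.pi * t / 4, l₃, Cᴴ, hl₃, hC.conjTranspose, ?_⟩
  rw [hUe, Matrix.conjTranspose_smul, Matrix.conjTranspose_mul, Rprod_conjTranspose, ht,
    smul_smul, omg_pow_phase]
  congr 1
  rw [Complex.star_def, ← Complex.exp_conj, ← Complex.exp_add]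
  congr 1
  simp only [_root_.map_mul, Complex.conj_I, Complex.conj_ofReal]
  push_cast
  ring

lemma good_Tgate : Good (Tgate n) := by
  rcases Nat.eq_zero_or_pos n with hn | hn
  · subst hn
    have : Tgate 0 = 1 := by
      rw [Tgate]
      rw [show (fun x : QVec 0 => if h : (0:ℕ) < 0 then
          (if x ⟨0, h⟩ = 1 then Complex.exp (Complex.I * Real.pi / 4) else 1) else 1)
        = fun _ => (1:ℂ) from funext fun x => dif_neg (lt_irrefl 0)]
      exact Matrix.diagonal_one
    rw [this]
    exact Good.clifford isClifford_one
  · set j : Fin n := ⟨0, hn⟩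
    have hb : Pauli (0 : QVec n) (ej j) = Matrix.diagonal fun x => (-1 : ℂ) ^ ((x j).val) := by
      funext x y
      show (if x = y + 0 then Complex.I ^ dotN 0 (ej j) * (-1:ℂ) ^ dotN (ej j) y else 0) = _
      have hd0 : dotN (0 : QVec n) (ej j) = 0 := by
        unfold dotN; simp [ZMod.val_zero]
      rw [hd0, pow_zero, one_mul, add_zero, dotN_comm, dotN_ej]
      by_cases h : x = y
      · subst h; rw [if_pos rfl, Matrix.diagonal_apply_eq]
      · rw [if_neg h, (Matrix.diagonal_apply_ne _ h).symm]
    have hT : Tgate n = Rgate (Pauli (0 : QVec n) (ej j)) := by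
      rw [hb, Tgate, Rgate]
      have hfun : (fun x : QVec n => if h : 0 < n then
            (if x ⟨0, h⟩ = 1 then Complex.exp (Complex.I * Real.pi / 4) else 1) else 1)
          = fun x : QVec n => if x j = 1 then Complex.exp (Complex.I * Real.pi / 4) else 1 :=
        funext fun x => by rw [dif_pos hn]
      rw [hfun]
      funext x y
      simp only [Matrix.add_apply, Matrix.smul_apply, Matrix.one_apply,
        Matrix.diagonal_apply, smul_eq_mul]
      by_cases h : x = y
      · rw [if_pos h, if_pos h, if_pos h]
        rcases (show ∀ u : ZMod 2, u = 0 ∨ u = 1 by decide) (x j) with h0 | h0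
        · rw [if_neg (h0 ▸ (by decide : ¬ ((0 : ZMod 2) = 1))), h0,
            show ZMod.val (0 : ZMod 2) = 0 from rfl, pow_zero]
          ring
        · rw [if_pos h0, h0, show ZMod.val (1 : ZMod 2) = 1 from rfl, pow_one]
          ring
      · rw [if_neg h, if_neg h, if_neg h, mul_zero, mul_zero, add_zero]
    rw [hT]
    refine ⟨0, [((0 : QVec n), ej j)], 1, ?_, isClifford_one, ?_⟩
    · intro p hp
      rcases List.mem_singleton.mp hp with rfl
      intro h1
      obtain ⟨-, h2⟩ := (Pauli_eq_one_iff _ _).mp h1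
      have := congrFun h2 j
      simp [ej] at this
    · rw [Rprod_cons, Rprod_nil]
      push_cast
      simp

theorem cliffordT_decomposition' (U : Matrix.unitaryGroup (QVec n) ℂ)
    (hU : U ∈ CliffordTGroup n) : Good (U : Matrix (QVec n) (QVec n) ℂ) := by
  refine Subgroup.closure_induction ?_ ?_ ?_ ?_ hU
  · rintro u (hu | hu)
    · exact Good.clifford hu
    · rw [hu]; exact good_Tgate
  · exact Good.clifford isClifford_one
  · intro u v _ _ hu hv
    exact hu.mul hv
  · intro u _ hu
    have : ((u⁻¹ : Matrix.unitaryGroup (QVec n) ℂ) : Matrix (QVec n) (QVec n) ℂ)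
        = (u : Matrix (QVec n) (QVec n) ℂ)ᴴ := rfl
    rw [this]
    exact hu.conjTranspose
end

lemma exp_phase_normalize (φ : ℝ) : ∃ φ' : ℝ, φ' ∈ Set.Ico 0 (2 * Real.pi) ∧
    Complex.exp (Complex.I * φ) = Complex.exp (Complex.I * φ') := by
  have hpi : (0:ℝ) < 2 * Real.pi := by positivity
  set k : ℤ := ⌊φ / (2 * Real.pi)⌋ with hk
  refine ⟨φ - 2 * Real.pi * k, ⟨?_, ?_⟩, ?_⟩
  · have := Int.sub_floor_div_mul_nonneg φ hpi
    linarith [this]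
  · have := Int.sub_floor_div_mul_lt φ hpi
    linarith [this]
  · rw [show Complex.I * (φ:ℂ) = Complex.I * ((φ - 2 * Real.pi * k : ℝ) : ℂ)
        + (k : ℂ) * (2 * (Real.pi:ℂ) * Complex.I) by push_cast; ring,
      Complex.exp_add, Complex.exp_int_mul_two_pi_mul_I, mul_one]


end

/-- Every unitary in the Clifford+T group can be written as
`U = e^{iφ} (∏_{j=m}^{1} R(P_j)) C₀` with `φ ∈ [0,2π)`, each `P_j` a non-identity
Pauli matrix, and `C₀` a Clifford unitary. -/
theorem cliffordT_decomposition (n : ℕ) (U : Matrix.unitaryGroup (QVec n) ℂ)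
    (hU : U ∈ CliffordTGroup n) :
    ∃ φ : ℝ, φ ∈ Set.Ico 0 (2 * Real.pi) ∧
      ∃ (m : ℕ) (P : Fin m → QVec n × QVec n) (C₀ : Matrix (QVec n) (QVec n) ℂ),
        (∀ j, Pauli (P j).1 (P j).2 ≠ 1) ∧ IsClifford C₀ ∧
        (U : Matrix (QVec n) (QVec n) ℂ) =
          Complex.exp (Complex.I * φ) •
            ((List.ofFn fun j => Rgate (Pauli (P j).1 (P j).2)).prod * C₀) := by
  obtain ⟨φ, l, C₀, hl, hC, hUe⟩ := cliffordT_decomposition' U hU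
  obtain ⟨φ', hφ'mem, hφ'⟩ := exp_phase_normalize φ
  refine ⟨φ', hφ'mem, l.length, fun j => l.get j, C₀, fun j => hl _ (l.get_mem j), hC, ?_⟩
  have hofn : (List.ofFn fun j => Rgate (Pauli ((l.get j)).1 ((l.get j)).2))
      = l.map fun p => Rgate (Pauli p.1 p.2) := by
    conv_rhs => rw [← List.ofFn_get l]
    rw [List.map_ofFn]
    rfl
  rw [hofn, hUe, hφ']
  rfl
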